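/- arXiv:2212.13836 — 9 statements merged into one kernel-verified Lean document; each statement's English description precedes it below -/
import Mathlib

section
/- Let G be a group, A an abelian group regarded as a G-module with trivial action, n a natural number, γ ∈ G, and let C_γ ≤ G be the centralizer of γ. Suppose c : G^{n+1} → A is an inhomogeneous (n+1)-cocycle of G with coefficients in A, i.e. for all g_0, …, g_{n+1} ∈ G one has c(g_1,…,g_{n+1}) + Σ_{i=1}^{n+1} (−1)^i c(g_0,…,g_{i−1}·g_i,…,g_{n+1}) + (−1)^{n+2} c(g_0,…,g_n) = 0. Define the transgressed cochain tr_γ(c) : (C_γ)^n → A by tr_γ(c)(h_1,…,h_n) := Σ_{j=0}^{n} (−1)^j c(h_1,…,h_j, γ, h_{j+1},…,h_n), i.e. the alternating sum over all ways of inserting γ among the arguments. Then tr_γ(c) is an inhomogeneous n-cocycle of the group C_γ with coefficients in A (trivial action). -/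
open Finset

/-- The inhomogeneous coboundary operator on cochains of a group `G` with values in an
abelian group `A` with trivial `G`-action:
`(d c)(g₀,…,gₙ) = c(g₁,…,gₙ) + ∑_{i=1}^{n} (−1)^i c(g₀,…,g_{i−1}·g_i,…,gₙ)
  + (−1)^{n+1} c(g₀,…,g_{n−1})`. -/
def dCochain {G : Type*} [Group G] {A : Type*} [AddCommGroup A] {n : ℕ}
    (c : (Fin n → G) → A) : (Fin (n + 1) → G) → A :=
  fun g => c (fun i => g i.succ) +
    ∑ j : Fin (n + 1), ((-1 : ℤ) ^ ((j : ℕ) + 1)) • c (Fin.contractNth j (· * ·) g)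

/-- The transgression of an `(n+1)`-cochain at `γ`: the alternating sum over all ways of
inserting `γ` among the arguments (which are taken in the centralizer of `γ`):
`tr_γ(c)(h₁,…,hₙ) = ∑_{j=0}^{n} (−1)^j c(h₁,…,h_j, γ, h_{j+1},…,hₙ)`. -/
def transgression {G : Type*} [Group G] {A : Type*} [AddCommGroup A] {n : ℕ} (γ : G)
    (c : (Fin (n + 1) → G) → A) :
    (Fin n → Subgroup.centralizer ({γ} : Set G)) → A :=
  fun h => ∑ j : Fin (n + 1), ((-1 : ℤ) ^ (j : ℕ)) • c (j.insertNth γ (fun i => (h i : G)))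

/-!
On tuples commuting with `γ`, inserting `γ` intertwines the coboundaries up to sign:
`d (tr_γ c) = - tr_γ (d c)`. Expanding `tr_γ (d c)`, the faces that multiply `γ` into a
neighbour `hᵢ` cancel in pairs because `γ hᵢ = hᵢ γ`, the face dropping a leading `γ`
cancels the one dropping a trailing `γ`, and every other face of `c(…, γ, …)` is `γ`
inserted into a face of `h`; these regroup into `-d (tr_γ c)`. So `tr_γ` sends cocycles
to cocycles.
-/

namespace Fin

variable {α : Type*} {n : ℕ}

lemma insertNth_apply_eq_dite (j : Fin (n + 1)) (x : α) (p : Fin n → α) (m : Fin (n + 1)) :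
    (insertNth j x p : Fin (n + 1) → α) m =
      if h : (m : ℕ) < j then p ⟨m, by omega⟩
      else if h' : (m : ℕ) = j then x else p ⟨m - 1, by omega⟩ := by
  rcases lt_trichotomy (m : ℕ) j with h | h | h
  · rw [dif_pos h, insertNth_apply_below (show m < j from h), eq_rec_constant]; rfl
  · rw [dif_neg h.not_lt, dif_pos h, show m = j from Fin.ext h, insertNth_apply_same]
  · rw [dif_neg (by omega), dif_neg (by omega), insertNth_apply_above (show j < m from h),
      eq_rec_constant]
    rfl

lemma contractNth_succ_insertNth_castSucc (op : α → α → α) (x : α) (H : Fin (n + 1) → α)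
    {i k : Fin (n + 1)} (hki : k ≤ i) :
    contractNth i.succ op (insertNth k.castSucc x H) = insertNth k x (contractNth i op H) := by
  rw [le_def] at hki
  ext m
  simp only [contractNth, insertNth_apply_eq_dite, val_castSucc, val_succ]
  split_ifs <;> first | omega | (congr <;> simp <;> omega)

lemma contractNth_castSucc_insertNth_succ (op : α → α → α) (x : α) (H : Fin (n + 1) → α)
    {i k : Fin (n + 1)} (hik : i < k) :
    contractNth i.castSucc op (insertNth k.succ x H) = insertNth k x (contractNth i op H) := by
  rw [lt_def] at hik
  ext m
  simp only [contractNth, insertNth_apply_eq_dite, val_castSucc, val_succ]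
  split_ifs <;> first | omega | (congr <;> simp <;> omega)

lemma val_succAbove_add_val_succAbove (i k : Fin (n + 1)) :
    ((i.succ.succAbove k : ℕ) + ((i.succ.succAbove k).succAbove i : ℕ)) = i + k + 1 := by
  rcases le_or_gt k i with hki | hik
  · rw [succAbove_succ_of_le _ _ hki, succAbove_castSucc_of_le _ _ hki]
    simp only [val_castSucc, val_succ]; omega
  · rw [succAbove_succ_of_lt _ _ hik, succAbove_succ_of_le _ _ hik.le]
    simp only [val_castSucc, val_succ]; omega

lemma contractNth_succAbove_insertNth_succAbove (op : α → α → α) (x : α)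
    (H : Fin (n + 1) → α) (i k : Fin (n + 1)) :
    contractNth ((i.succ.succAbove k).succAbove i) op (insertNth (i.succ.succAbove k) x H) =
      insertNth k x (contractNth i op H) := by
  rcases le_or_gt k i with hki | hik
  · rw [succAbove_succ_of_le _ _ hki, succAbove_castSucc_of_le _ _ hki,
      contractNth_succ_insertNth_castSucc _ _ _ hki]
  · rw [succAbove_succ_of_lt _ _ hik, succAbove_succ_of_le _ _ hik.le,
      contractNth_castSucc_insertNth_succ _ _ _ hik]

lemma contractNth_castSucc_insertNth_castSucc_self (op : α → α → α) (x : α)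
    (H : Fin (n + 1) → α) (i : Fin (n + 1)) :
    contractNth i.castSucc op (insertNth i.castSucc x H) = Function.update H i (op x (H i)) := by
  ext m
  simp only [contractNth, insertNth_apply_eq_dite, val_castSucc, val_succ, Function.update_apply,
    Fin.ext_iff]
  split_ifs <;> first | omega | congr

lemma contractNth_castSucc_insertNth_succ_self (op : α → α → α) (x : α)
    (H : Fin (n + 1) → α) (i : Fin (n + 1)) :
    contractNth i.castSucc op (insertNth i.succ x H) = Function.update H i (op (H i) x) := by
  ext m
  simp only [contractNth, insertNth_apply_eq_dite, val_castSucc, val_succ, Function.update_apply,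
    Fin.ext_iff]
  split_ifs <;> first | omega | congr

lemma contractNth_last_insertNth_last (op : α → α → α) (x : α) (H : Fin n → α) :
    contractNth (last n) op (insertNth (last n) x H) = H := by
  ext m
  rw [contractNth_apply_of_lt _ _ _ _ m.isLt, insertNth_last', snoc_castSucc]

lemma tail_insertNth_zero (x : α) (H : Fin n → α) :
    tail (insertNth 0 x H : Fin (n + 1) → α) = H := by
  rw [insertNth_zero', tail_cons]

lemma tail_insertNth_succ (x : α) (H : Fin (n + 1) → α) (k : Fin (n + 1)) :
    tail (insertNth k.succ x H : Fin (n + 2) → α) = insertNth k x (tail H) := by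
  rw [← cons_self_tail H, insertNth_succ_cons, tail_cons, tail_cons]

lemma sum_sum_eq_last_add_adjacent_add_succAbove {M : Type*} [AddCommMonoid M]
    (f : Fin (n + 2) → Fin (n + 2) → M) :
    ∑ j, ∑ i, f j i =
      f (last _) (last _) + ∑ i : Fin (n + 1), (f i.castSucc i.castSucc + f i.succ i.castSucc) +
        ∑ i : Fin (n + 1), ∑ k : Fin (n + 1),
          f (i.succ.succAbove k) ((i.succ.succAbove k).succAbove i) := by
  calc ∑ j, ∑ i, f j i = ∑ j, f j j + ∑ i : Fin (n + 1), ∑ j, f j (j.succAbove i) := by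
        rw [sum_comm (f := fun i j => f j (j.succAbove i)), ← sum_add_distrib]
        exact sum_congr rfl fun j _ => sum_univ_succAbove (f j) j
    _ = _ := by
        simp only [sum_univ_castSucc (fun j => f j j), succAbove_succ_self, sum_add_distrib,
          fun i : Fin (n + 1) => sum_univ_succAbove (fun j => f j (j.succAbove i)) i.succ]
        abel

end Fin

section Transgression

variable {G : Type*} {A : Type*} [AddCommGroup A] {n : ℕ}

def insertionSum (γ : G) (c : (Fin (n + 1) → G) → A) (h : Fin n → G) : A :=
  ∑ j : Fin (n + 1), ((-1 : ℤ) ^ (j : ℕ)) • c (j.insertNth γ h)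

lemma sum_neg_one_pow_smul_tail_insertNth (γ : G) (c : (Fin (n + 1) → G) → A)
    (H : Fin (n + 1) → G) :
    ∑ j : Fin (n + 2),
        ((-1 : ℤ) ^ (j : ℕ)) • c (Fin.tail (j.insertNth γ H : Fin (n + 2) → G)) =
      c H - insertionSum γ c (Fin.tail H) := by
  simp only [Fin.sum_univ_succ, Fin.val_zero, pow_zero, one_smul, Fin.tail_insertNth_zero,
    Fin.val_succ, pow_succ, mul_neg_one, neg_smul, Fin.tail_insertNth_succ, sum_neg_distrib,
    insertionSum, sub_eq_add_neg]

variable [Group G]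

lemma sum_sum_contractNth_insertNth (γ : G) (c : (Fin (n + 1) → G) → A)
    (H : Fin (n + 1) → G) (hH : ∀ k, Commute (H k) γ) :
    ∑ j : Fin (n + 2), ∑ i : Fin (n + 2), ((-1 : ℤ) ^ ((j : ℕ) + ((i : ℕ) + 1))) •
        c (Fin.contractNth i (· * ·) (j.insertNth γ H)) =
      -c H + ∑ i : Fin (n + 1), ((-1 : ℤ) ^ (i : ℕ)) •
        insertionSum γ c (Fin.contractNth i (· * ·) H) := by
  rw [Fin.sum_sum_eq_last_add_adjacent_add_succAbove]
  have corner : ((-1 : ℤ) ^ ((n + 1) + ((n + 1) + 1))) •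
        c (Fin.contractNth (Fin.last (n + 1)) (· * ·) ((Fin.last (n + 1)).insertNth γ H)) =
      -c H := by
    rw [Fin.contractNth_last_insertNth_last, Odd.neg_one_pow ⟨n + 1, by omega⟩, neg_one_smul]
  have adjacent (i : Fin (n + 1)) :
      ((-1 : ℤ) ^ ((i : ℕ) + ((i : ℕ) + 1))) •
          c (Fin.contractNth i.castSucc (· * ·) (i.castSucc.insertNth γ H)) +
        ((-1 : ℤ) ^ (((i : ℕ) + 1) + ((i : ℕ) + 1))) •
          c (Fin.contractNth i.castSucc (· * ·) (i.succ.insertNth γ H)) = 0 := by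
    rw [Fin.contractNth_castSucc_insertNth_castSucc_self,
      Fin.contractNth_castSucc_insertNth_succ_self, (hH i).eq,
      show (i : ℕ) + 1 + ((i : ℕ) + 1) = (i : ℕ) + ((i : ℕ) + 1) + 1 by omega, pow_succ,
      mul_neg_one, neg_smul, add_neg_cancel]
  have offDiagonal (i k : Fin (n + 1)) :
      ((-1 : ℤ) ^ (((i.succ.succAbove k : Fin (n + 2)) : ℕ) +
          ((((i.succ.succAbove k).succAbove i : Fin (n + 2)) : ℕ) + 1))) •
        c (Fin.contractNth ((i.succ.succAbove k).succAbove i) (· * ·)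
          ((i.succ.succAbove k).insertNth γ H)) =
      ((-1 : ℤ) ^ (i : ℕ)) • ((-1 : ℤ) ^ (k : ℕ)) •
        c (k.insertNth γ (Fin.contractNth i (· * ·) H)) := by
    rw [Fin.contractNth_succAbove_insertNth_succAbove, ← add_assoc,
      Fin.val_succAbove_add_val_succAbove, smul_smul, ← pow_add, pow_succ, pow_succ, mul_assoc,
      neg_one_mul, neg_neg, mul_one]
  simp only [Fin.val_last, Fin.val_castSucc, Fin.val_succ, corner, adjacent, offDiagonal,
    sum_const_zero, add_zero, insertionSum, smul_sum]

lemma insertionSum_dCochain (γ : G) (c : (Fin (n + 1) → G) → A) (H : Fin (n + 1) → G)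
    (hH : ∀ k, Commute (H k) γ) :
    insertionSum γ (dCochain c) H = -dCochain (insertionSum γ c) H := by
  have hsum := sum_sum_contractNth_insertNth γ c H hH
  have htail := sum_neg_one_pow_smul_tail_insertNth γ c H
  simp only [insertionSum, dCochain, Fin.tail_def, smul_add, smul_sum, smul_smul, ← pow_add,
    sum_add_distrib] at hsum htail ⊢
  rw [htail, hsum]
  simp only [add_right_comm _ 1, pow_succ, mul_neg_one, neg_smul, sum_neg_distrib]
  abel

lemma dCochain_comp_monoidHom {H : Type*} [Group H] (f : H →* G) (c : (Fin n → G) → A)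
    (h : Fin (n + 1) → H) :
    dCochain (fun g => c (f ∘ g)) h = dCochain c (f ∘ h) := by
  simp only [dCochain, Fin.comp_contractNth (· * ·) (· * ·) (map_mul f)]
  rfl

lemma dCochain_transgression (γ : G) (c : (Fin (n + 1) → G) → A) :
    dCochain (transgression γ c) = -transgression γ (dCochain c) := by
  funext h
  have hcomm (k : Fin (n + 1)) : Commute ((h k : G)) γ :=
    Subgroup.mem_centralizer_singleton_iff.mp (h k).2
  calc dCochain (transgression γ c) h
      = dCochain (insertionSum γ c) (fun k => (h k : G)) :=
        dCochain_comp_monoidHom (Subgroup.centralizer {γ}).subtype (insertionSum γ c) h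
    _ = -insertionSum γ (dCochain c) (fun k => (h k : G)) := by
        rw [insertionSum_dCochain γ c _ hcomm, neg_neg]

end Transgression

/-- If `c` is an inhomogeneous `(n+1)`-cocycle of `G` with coefficients in the
trivial `G`-module `A`, then its transgression at `γ` is an inhomogeneous `n`-cocycle of the
centralizer `C_γ` with coefficients in `A`. -/
theorem transgression_isCocycle {G : Type*} [Group G] {A : Type*} [AddCommGroup A]
    (n : ℕ) (γ : G) (c : (Fin (n + 1) → G) → A)
    (hc : dCochain c = 0) :
    dCochain (transgression γ c) = 0 := by
  rw [dCochain_transgression, hc]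
  funext h
  simp [transgression]
end

section
/- Let G be a group acting on a set X, and for each conjugacy class c of G fix a representative g_c ∈ G. For g ∈ G let X^g := {x ∈ X | g·x = x} denote the g-fixed points and C_g the centralizer of g; the restricted action of C_g preserves X^g. Then the inertia groupoid Fun(B ℤ, X ⫽ G) of the action groupoid X ⫽ G is equivalent, as a category, to the disjoint union (sigma category) over all conjugacy classes c of G of the action groupoids X^{g_c} ⫽ C_{g_c}. In particular, taking X a one-point set, Fun(B ℤ, B G) is equivalent to the disjoint union over conjugacy classes [g] of the one-object groupoids B C_g on the centralizers. -/
open CategoryTheory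

/-- The action of the centralizer of `g` on the `g`-fixed points `X^g = {x | g • x = x}`. -/
instance fixedSMul {G : Type*} [Group G] {X : Type*} [MulAction G X] (g : G) :
    SMul (Subgroup.centralizer ({g} : Set G)) {x : X // g • x = x} where
  smul h x := ⟨(h : G) • (x : X), by
    have hc : g * (h : G) = (h : G) * g :=
      Subgroup.mem_centralizer_iff.mp h.2 g (Set.mem_singleton g)
    rw [smul_smul, hc, ← smul_smul, x.2]⟩

instance fixedMulAction {G : Type*} [Group G] {X : Type*} [MulAction G X] (g : G) :
    MulAction (Subgroup.centralizer ({g} : Set G)) {x : X // g • x = x} where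
  one_smul x := Subtype.ext (by
    show ((1 : Subgroup.centralizer ({g} : Set G)) : G) • (x : X) = x
    simp)
  mul_smul a b x := Subtype.ext (by
    show ((a * b : Subgroup.centralizer ({g} : Set G)) : G) • (x : X)
      = (a : G) • ((b : G) • (x : X))
    rw [Subgroup.coe_mul, mul_smul])

/-!
A functor `B ℤ ⥤ X ⫽ G` is a point `x` together with its monodromy `g ∈ Stab x`, the image
of the generator, and a natural transformation `(x, g) ⟶ (x', g')` is an element `h` with
`h • x = x'` and `h * g = g' * h`. Conjugating by a suitable `k` therefore moves any such
functor to one whose monodromy is a chosen representative, natural transformations only exist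
between functors with conjugate monodromies, and between two functors with the same monodromy
`g` they are exactly the elements of `C_g` carrying one `g`-fixed point to the other. For `X` a
point, `X ⫽ G` is `B G` via the projection `π`.
-/

namespace CategoryTheory

namespace Sigma

universe w v u

variable {I : Type w} {C : I → Type u} [∀ i, Category.{v} (C i)]

theorem eq_of_hom {i j : I} {X : C i} {Y : C j}
    (f : (⟨i, X⟩ : Σ i, C i) ⟶ ⟨j, Y⟩) : i = j := by
  change SigmaHom _ _ at f
  cases f
  rfl

section Desc

variable {D : Type*} [Category D] (F : ∀ i, C i ⥤ D)

instance faithful_desc [∀ i, (F i).Faithful] : (desc F).Faithful where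
  map_injective {X Y} f g h := by
    obtain ⟨i, X⟩ := X
    obtain ⟨j, Y⟩ := Y
    change SigmaHom _ _ at f g
    cases f with
    | mk f =>
      cases g with
      | mk g => rw [(F i).map_injective h]

theorem full_desc [∀ i, (F i).Full]
    (h : ∀ i j (X : C i) (Y : C j), ((F i).obj X ⟶ (F j).obj Y) → i = j) : (desc F).Full where
  map_surjective {X Y} f := by
    obtain ⟨i, X⟩ := X
    obtain ⟨j, Y⟩ := Y
    obtain rfl := h i j X Y f
    exact ⟨SigmaHom.mk ((F i).preimage f), (F i).map_preimage f⟩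

end Desc

instance Functor.isEquivalence_sigma {D : I → Type u} [∀ i, Category.{v} (D i)]
    (F : ∀ i, C i ⥤ D i) [∀ i, (F i).IsEquivalence] : (Functor.sigma F).IsEquivalence where
  faithful := faithful_desc _
  full := full_desc _ fun _ _ _ _ f => eq_of_hom f
  essSurj := ⟨fun ⟨i, Y⟩ =>
    ⟨⟨i, (F i).objPreimage Y⟩, ⟨(incl i).mapIso ((F i).objObjPreimageIso Y)⟩⟩⟩

end Sigma

namespace ActionCategory

section Monoid

variable (M : Type*) [Monoid M] (Y : Type*) [MulAction M Y]

instance faithful_π : (π M Y).Faithful where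
  map_injective h := Subtype.ext h

instance full_π [Subsingleton Y] : (π M Y).Full where
  map_surjective f := ⟨⟨f, Subsingleton.elim (α := Y) _ _⟩, rfl⟩

instance essSurj_π [Nonempty Y] : (π M Y).EssSurj where
  mem_essImage _ := ⟨Classical.arbitrary _, ⟨Iso.refl _⟩⟩

instance isEquivalence_π [Subsingleton Y] [Nonempty Y] : (π M Y).IsEquivalence where

end Monoid

variable {G : Type*} [Group G] {X : Type*} [MulAction G X]

def loopFunctor (p : ActionCategory G X) (g : MulAction.stabilizer G p.back) :
    SingleObj (Multiplicative ℤ) ⥤ ActionCategory G X where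
  obj _ := p
  map n := ⟨↑(zpowersHom _ g n), (zpowersHom _ g n).2⟩
  map_id _ := Subtype.ext <| by rw [SingleObj.id_as_one, map_one]; rfl
  map_comp m n := Subtype.ext <| by rw [SingleObj.comp_as_mul, map_mul]; rfl

section LoopFunctorHom

variable {p q : ActionCategory G X} {g : MulAction.stabilizer G p.back}
  {g' : MulAction.stabilizer G q.back}

def loopFunctorHom (u : p ⟶ q) (h : SemiconjBy u.val g g') :
    loopFunctor p g ⟶ loopFunctor q g' :=
  SingleObj.natTrans u fun n => Subtype.ext <|
    show u.val * (g : G) ^ n.toAdd = (g' : G) ^ n.toAdd * u.val from (h.zpow_right _).eq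

theorem semiconjBy_app_of_loopFunctor_hom (σ : loopFunctor p g ⟶ loopFunctor q g') :
    SemiconjBy (σ.app (SingleObj.star _)).val g g' := by
  have h := congrArg Subtype.val
    (σ.naturality (X := SingleObj.star _) (Y := SingleObj.star _) (Multiplicative.ofAdd 1))
  change _ * (g : G) ^ (1 : ℤ) = (g' : G) ^ (1 : ℤ) * _ at h
  rwa [zpow_one, zpow_one] at h

noncomputable def loopFunctorIso (u : p ⟶ q) (h : SemiconjBy u.val g g') :
    loopFunctor p g ≅ loopFunctor q g' :=
  have (n : SingleObj (Multiplicative ℤ)) : IsIso ((loopFunctorHom u h).app n) :=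
    IsIso.of_groupoid _
  have := NatIso.isIso_of_isIso_app (loopFunctorHom u h)
  asIso (loopFunctorHom u h)

end LoopFunctorHom

def monodromy (F : SingleObj (Multiplicative ℤ) ⥤ ActionCategory G X) :
    MulAction.stabilizer G (F.obj (SingleObj.star _)).back :=
  ⟨(F.map (Multiplicative.ofAdd 1)).val, (F.map _).2⟩

theorem map_val_eq_monodromy_zpow (F : SingleObj (Multiplicative ℤ) ⥤ ActionCategory G X)
    (n : Multiplicative ℤ) :
    (F.map (X := SingleObj.star _) (Y := SingleObj.star _) n).val =
      (monodromy F : G) ^ n.toAdd :=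
  MonoidHom.apply_mint (α := G)
    { toFun n := (F.map (X := SingleObj.star _) (Y := SingleObj.star _) n).val
      map_one' := congrArg Subtype.val (F.map_id _)
      map_mul' m n := congrArg Subtype.val (F.map_comp n m) } n

def isoLoopFunctorMonodromy (F : SingleObj (Multiplicative ℤ) ⥤ ActionCategory G X) :
    F ≅ loopFunctor _ (monodromy F) :=
  NatIso.ofComponents (fun _ => Iso.refl _) fun n => Subtype.ext <|
    show (1 : G) * _ = _ * 1 by rw [mul_one, one_mul, map_val_eq_monodromy_zpow]; rfl

section FixedPoints

variable (g : G)

def fixedPointsToInertia :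
    ActionCategory (Subgroup.centralizer {g}) {x : X // g • x = x} ⥤
      (SingleObj (Multiplicative ℤ) ⥤ ActionCategory G X) where
  obj p := loopFunctor (objEquiv G X p.back.1) ⟨g, p.back.2⟩
  map f := loopFunctorHom ⟨(f.val : Subgroup.centralizer {g}).val, congrArg Subtype.val f.2⟩
    (Subgroup.mem_centralizer_singleton_iff.1 f.val.2)

instance faithful_fixedPointsToInertia : (fixedPointsToInertia (X := X) g).Faithful where
  map_injective h := by
    have := congrArg Subtype.val (NatTrans.congr_app h (SingleObj.star _))
    exact Subtype.ext (Subtype.ext this)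

instance full_fixedPointsToInertia : (fixedPointsToInertia (X := X) g).Full where
  map_surjective σ :=
    ⟨⟨⟨(σ.app (SingleObj.star _)).val,
      Subgroup.mem_centralizer_singleton_iff.2 (semiconjBy_app_of_loopFunctor_hom σ)⟩,
      Subtype.ext (σ.app (SingleObj.star _)).2⟩,
    by ext; rfl⟩

end FixedPoints

section ConjClasses

variable (rep : ConjClasses G → G)

def sigmaToInertia :
    (Σ c : ConjClasses G,
        ActionCategory (Subgroup.centralizer {rep c}) {x : X // rep c • x = x}) ⥤
      (SingleObj (Multiplicative ℤ) ⥤ ActionCategory G X) :=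
  Sigma.desc fun c => fixedPointsToInertia (rep c)

variable {rep}

theorem full_sigmaToInertia (hrep : ∀ c, ConjClasses.mk (rep c) = c) :
    (sigmaToInertia (X := X) rep).Full :=
  Sigma.full_desc _ fun c c' _ _ σ => by
    rw [← hrep c, ← hrep c', ConjClasses.mk_eq_mk_iff_isConj]
    exact ⟨toUnits _, semiconjBy_app_of_loopFunctor_hom σ⟩

theorem essSurj_sigmaToInertia (hrep : ∀ c, ConjClasses.mk (rep c) = c) :
    (sigmaToInertia (X := X) rep).EssSurj where
  mem_essImage F := by
    set x := (F.obj (SingleObj.star _)).back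
    set c := ConjClasses.mk (monodromy F : G)
    obtain ⟨⟨k, _, _, _⟩, hk⟩ := ConjClasses.mk_eq_mk_iff_isConj.1 (hrep c)
    have hfix : rep c • (k⁻¹ • x) = k⁻¹ • x := by
      rw [smul_smul, ← hk.inv_symm_left.eq, mul_smul,
        MulAction.mem_stabilizer_iff.1 (monodromy F).2]
    exact ⟨⟨c, objEquiv _ _ ⟨k⁻¹ • x, hfix⟩⟩,
      ⟨loopFunctorIso (homOfPair x k) hk ≪≫ (isoLoopFunctorMonodromy F).symm⟩⟩

theorem isEquivalence_sigmaToInertia (hrep : ∀ c, ConjClasses.mk (rep c) = c) :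
    (sigmaToInertia (X := X) rep).IsEquivalence where
  faithful := Sigma.faithful_desc _
  full := full_sigmaToInertia hrep
  essSurj := essSurj_sigmaToInertia hrep

end ConjClasses

end ActionCategory

end CategoryTheory

/-- Let `G` act on `X`, and fix a representative `rep c ∈ G` for every conjugacy
class `c` of `G`.  Then the inertia groupoid `Fun(B ℤ, X ⫽ G)` of the action groupoid is
equivalent, as a category, to the disjoint union (sigma category) over all conjugacy classes
`c` of the action groupoids `X^{rep c} ⫽ C_{rep c}` of the centralizers acting on the fixed
points.  In particular (the case of a one-point `X`), `Fun(B ℤ, B G)` is equivalent to the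
disjoint union over conjugacy classes of the one-object groupoids on the centralizers. -/
theorem inertia_actionCategory_equiv_sigma {G : Type*} [Group G] {X : Type*} [MulAction G X]
    (rep : ConjClasses G → G) (hrep : ∀ c, ConjClasses.mk (rep c) = c) :
    Nonempty ((SingleObj (Multiplicative ℤ) ⥤ ActionCategory G X) ≌
      (Σ c : ConjClasses G,
        ActionCategory (Subgroup.centralizer ({rep c} : Set G)) {x : X // rep c • x = x})) ∧
    Nonempty ((SingleObj (Multiplicative ℤ) ⥤ SingleObj G) ≌
      (Σ c : ConjClasses G, SingleObj (Subgroup.centralizer ({rep c} : Set G)))) := by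
  have := ActionCategory.isEquivalence_sigmaToInertia (X := X) hrep
  have := ActionCategory.isEquivalence_sigmaToInertia (X := PUnit.{1}) hrep
  have (c : ConjClasses G) : Nonempty {x : PUnit.{1} // rep c • x = x} := ⟨⟨⟨⟩, rfl⟩⟩
  exact ⟨⟨(ActionCategory.sigmaToInertia rep).asEquivalence.symm⟩,
    ⟨(ActionCategory.π G PUnit.{1}).asEquivalence.symm.congrRight.trans <|
      (ActionCategory.sigmaToInertia rep).asEquivalence.symm.trans
        (Sigma.Functor.sigma fun _ => ActionCategory.π _ _).asEquivalence⟩⟩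
end

section
/- Let G be a group, n a natural number, and F : B ℤ × [n] → B G a functor, where [n] denotes the linear order {0 < 1 < ⋯ < n} viewed as a category. Write γ := F(1, id_0) ∈ G for the image of the generator of ℤ at stage 0, and h_i := F(0, i → i+1) ∈ G (for 0 ≤ i < n) for the images of the generating edges. For 0 ≤ k ≤ n, let φ_k : [n+1] → B ℤ × [n] be the functor whose object part is the monotone surjection σ^k : [n+1] → [n] identifying k and k+1, and which sends the generating edge i → i+1 of [n+1] to (0, σ^k(i) → σ^k(i+1)) for i ≠ k, and to (1, id_k) for i = k. Then the composite functor F ∘ φ_k : [n+1] → B G, regarded as an (n+1)-simplex of the nerve of B G, is the sequence of edges (h_0, …, h_{k−1}, γ_k, h_k, …, h_{n−1}), where γ_k denotes the conjugate of γ by the composite of the first k edges, i.e. γ_k = (h_{k−1} ∘ ⋯ ∘ h_0) ∘ γ ∘ (h_{k−1} ∘ ⋯ ∘ h_0)^{−1} as endomorphisms of the unique object of B G. -/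
/-!
Since `[n]` is thin, the image under `F` of a morphism of `B ℤ × [n]` depends only on its
`ℤ`-component and its endpoints; this identifies the edges `i ≠ k` of `F ∘ φ_k` with the `h_j`.
The edge `k` is `F(1, id_k)`, and the interchange law in `B ℤ × [n]` for `(1, id_k)` and
`(0, 0 → k)` makes it the conjugate of `γ = F(1, id_0)` by `F(0, 0 → k) = h_{k-1} ⋯ h_0`.
-/

open CategoryTheory
open scoped CategoryTheory.Prod

/-- The generating edge `i → i+1` of the linear order `[m] = Fin (m+1)` viewed as a
category. -/
def edgeHom {m : ℕ} (i : Fin m) : (i.castSucc : Fin (m + 1)) ⟶ i.succ :=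
  homOfLE (Fin.castSucc_lt_succ : i.castSucc < i.succ).le

lemma Fin.val_predAbove {n : ℕ} (p : Fin n) (i : Fin (n + 1)) :
    (p.predAbove i : ℕ) = if (p : ℕ) < i then (i : ℕ) - 1 else i := by
  by_cases h : (p : ℕ) < i
  · rw [if_pos h, Fin.predAbove_of_castSucc_lt _ _ (by simpa [Fin.lt_def] using h), Fin.val_pred]
  · rw [if_neg h, Fin.predAbove_of_le_castSucc _ _ (by simpa [Fin.le_def] using h),
      Fin.coe_castPred]

lemma CategoryTheory.Functor.map_eq_map_fst_mkHom {M N C : Type*} [Monoid M] [Monoid N]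
    [Category C] [Quiver.IsThin C] (F : SingleObj M × C ⥤ SingleObj N)
    {X Y : SingleObj M × C} (m : X ⟶ Y) {a b : C} (f : a ⟶ b) (ha : X.2 = a) (hb : Y.2 = b) :
    F.map m = F.map (X := (SingleObj.star M, a)) (Y := (SingleObj.star M, b)) (m.1 ×ₘ f) := by
  obtain ⟨⟨⟩, a'⟩ := X
  obtain ⟨⟨⟩, b'⟩ := Y
  subst ha hb
  rw [Subsingleton.elim f m.2]
  rfl

lemma CategoryTheory.Functor.map_homOfLE_zero_eq_prod {N : Type*} [Monoid N] {n : ℕ}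
    (P : Fin (n + 1) ⥤ SingleObj N) (k : Fin (n + 1)) :
    P.map (homOfLE (Fin.zero_le k)) =
      ((List.ofFn fun i : Fin n => (P.map (edgeHom i) : N)).take k).reverse.prod := by
  induction k using Fin.induction with
  | zero => simpa using SingleObj.id_as_one (M := N) (P.obj 0)
  | succ i ih =>
    rw [show homOfLE (Fin.zero_le i.succ) = homOfLE (Fin.zero_le i.castSucc) ≫ edgeHom i
      from Subsingleton.elim _ _, P.map_comp, SingleObj.comp_as_mul, ih]
    simp [List.take_add_one]

lemma CategoryTheory.Functor.map_mkHom_id_eq_conj {M N C : Type*} [Monoid M] [Group N]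
    [Category C] (F : SingleObj M × C ⥤ SingleObj N) {a b : C} (f : a ⟶ b)
    (g : SingleObj.star M ⟶ SingleObj.star M) :
    F.map (g ×ₘ 𝟙 b) = F.map (𝟙 _ ×ₘ f) * F.map (g ×ₘ 𝟙 a) * (F.map (𝟙 _ ×ₘ f))⁻¹ := by
  apply eq_mul_inv_of_mul_eq
  have := (Bifunctor.diagonal F _ _ g _ _ f).trans (Bifunctor.diagonal' F _ _ g _ _ f).symm
  simpa only [SingleObj.comp_as_mul] using this

/-- Let `F : B ℤ × [n] ⥤ B G` be a functor, `γ := F(1, id₀)` the image of the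
generator of `ℤ` at stage `0`, and `h_i := F(0, i → i+1)` the images of the generating edges.
For `0 ≤ k ≤ n` let `φ_k : [n+1] ⥤ B ℤ × [n]` be the functor whose object part is the monotone
surjection `σ^k = Fin.predAbove k` identifying `k` and `k+1`, sending the generating edge
`i → i+1` to `(0, σ^k(i) → σ^k(i+1))` for `i ≠ k` and to `(1, id_k)` for `i = k` (the second
components of these conditions are automatic since hom-types in `[n]` are subsingletons, so
only the first components are required below).  Then the composite `F ∘ φ_k : [n+1] ⥤ B G`,
regarded as an `(n+1)`-simplex of the nerve of `B G`, is the sequence of edges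
`(h_0, …, h_{k−1}, γ_k, h_k, …, h_{n−1})`, where `γ_k = (h_{k−1} ⋯ h_0) γ (h_{k−1} ⋯ h_0)⁻¹`
is the conjugate of `γ` by the composite of the first `k` edges (composition of endomorphisms
of the unique object of `B G` agreeing with multiplication in `G`). -/
theorem evaluation_on_inertia_simplices {G : Type*} [Group G] (n : ℕ)
    (F : SingleObj (Multiplicative ℤ) × Fin (n + 1) ⥤ SingleObj G)
    (k : Fin (n + 1))
    (φ : Fin (n + 2) ⥤ SingleObj (Multiplicative ℤ) × Fin (n + 1))
    (hφobj : ∀ i, (φ.obj i).2 = k.predAbove i)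
    (hφmap : ∀ i : Fin (n + 1),
      (φ.map (edgeHom i)).1 = if i = k then Multiplicative.ofAdd 1 else 1)
    (γ : G)
    (hγ : γ = F.map (X := (SingleObj.star _, 0)) (Y := (SingleObj.star _, 0))
      (Multiplicative.ofAdd 1, 𝟙 (0 : Fin (n + 1))))
    (h : Fin n → G)
    (hh : ∀ i : Fin n, h i = F.map (X := (SingleObj.star _, i.castSucc))
      (Y := (SingleObj.star _, i.succ)) (1, edgeHom i))
    (p : G) (hp : p = (((List.ofFn h).take k).reverse).prod) :
    ∀ i : Fin (n + 1), (φ ⋙ F).map (edgeHom i) =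
      if hik : (i : ℕ) < (k : ℕ) then h ⟨i, by have := k.is_le; omega⟩
      else if hik2 : (i : ℕ) = (k : ℕ) then p * γ * p⁻¹
      else h ⟨(i : ℕ) - 1, by have := i.is_le; omega⟩ := by
  intro i
  have hedge (j : Fin n) (hik : i ≠ k) (hj : (j : ℕ) = if (k : ℕ) < i then (i : ℕ) - 1 else i) :
      (φ ⋙ F).map (edgeHom i) = h j := by
    have hik' : (i : ℕ) ≠ k := fun hi => hik (Fin.ext hi)
    have hs : (φ.obj i.castSucc).2 = j.castSucc := by
      ext; rw [hφobj, Fin.val_predAbove, Fin.val_castSucc, Fin.val_castSucc]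
      split_ifs at * <;> omega
    have ht : (φ.obj i.succ).2 = j.succ := by
      ext; rw [hφobj, Fin.val_predAbove, Fin.val_succ, Fin.val_succ]
      split_ifs at * <;> omega
    rw [Functor.comp_map, F.map_eq_map_fst_mkHom _ (edgeHom j) hs ht, hφmap, if_neg hik, hh]
  split_ifs with hlt heq
  · exact hedge _ (Fin.ne_of_lt hlt) (by simp; omega)
  · obtain rfl : i = k := Fin.ext heq
    set P := Prod.sectR (SingleObj.star _) (Fin (n + 1)) ⋙ F
    rw [Functor.comp_map, F.map_eq_map_fst_mkHom _ (𝟙 i) (by simp [hφobj]) (by simp [hφobj]),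
      hφmap, if_pos rfl, F.map_mkHom_id_eq_conj (homOfLE (Fin.zero_le i)), ← hγ,
      hp, show h = fun j => (P.map (edgeHom j) : G) from funext hh,
      ← P.map_homOfLE_zero_eq_prod]
    rfl
  · exact hedge _ (fun hi => heq (congrArg Fin.val hi)) (by simp; omega)
end

section
/- Let q : ℝ → ℝ/ℤ denote the quotient homomorphism onto the additive circle (AddCircle). For every natural number n, the map from ℝ × ℤ^n to ℝ^{n+1} sending (r, (m_1, …, m_n)) to the tuple whose i-th entry (0 ≤ i ≤ n) is r + m_1 + ⋯ + m_i (empty sum for i = 0) is a bijection onto the (n+1)-fold fiber product of ℝ over ℝ/ℤ, i.e. onto the set {(r_0, …, r_n) ∈ ℝ^{n+1} | q(r_i) = q(r_j) for all i, j}; moreover, it is a homeomorphism onto this subspace of ℝ^{n+1} (where ℤ carries the discrete topology). -/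
/-!
The inverse sends `v` to `(v 0, j ↦ ⌊v (j + 1) - v j⌋)`: on the fibre product each difference
`v (j + 1) - v j` is an integer, so the floor recovers it exactly, and it depends continuously
on `v` because `ℤ → ℝ` is a topological embedding.
-/

open Finset

theorem AddCircle.coe_eq_coe_iff_exists_zsmul {𝕜 : Type*} [AddCommGroup 𝕜] [LinearOrder 𝕜]
    [IsOrderedAddMonoid 𝕜] [TopologicalSpace 𝕜] [OrderTopology 𝕜] {p x y : 𝕜} :
    (x : AddCircle p) = y ↔ ∃ k : ℤ, k • p = x - y := by
  rw [← sub_eq_zero, ← AddCircle.coe_sub, AddCircle.coe_eq_zero_iff]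

theorem AddCircle.coe_add_intCast_one (x : ℝ) (k : ℤ) :
    ((x + k : ℝ) : AddCircle (1 : ℝ)) = x :=
  AddCircle.coe_eq_coe_iff_exists_zsmul.mpr ⟨k, by simp⟩

theorem intCast_floor_sub_of_coe_eq_coe {x y : ℝ} (h : (x : AddCircle (1 : ℝ)) = y) :
    (⌊x - y⌋ : ℝ) = x - y := by
  obtain ⟨k, hk⟩ := AddCircle.coe_eq_coe_iff_exists_zsmul.mp h
  rw [← hk, zsmul_one, Int.floor_intCast]

theorem Fin.partialSum_eq_sum_filter_val_lt {M : Type*} [AddCommMonoid M] {n : ℕ}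
    (f : Fin n → M) (i : Fin (n + 1)) :
    Fin.partialSum f i = ∑ j ∈ univ.filter (fun j : Fin n => (j : ℕ) < i), f j := by
  induction i using Fin.induction with
  | zero => simp
  | succ i ih =>
    have hfilter : univ.filter (fun j : Fin n => (j : ℕ) < i.succ) =
        insert i (univ.filter (fun j : Fin n => (j : ℕ) < i.castSucc)) := by
      ext j
      simp only [mem_filter, mem_univ, true_and, mem_insert, Fin.val_succ, Fin.val_castSucc,
        Fin.ext_iff]
      omega
    rw [Fin.partialSum_succ, ih, hfilter, sum_insert (by simp), add_comm]

theorem Continuous.floor_of_intCast_floor_eq {X : Type*} [TopologicalSpace X] {f : X → ℝ}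
    (hf : Continuous f) (hfloor : ∀ x, (⌊f x⌋ : ℝ) = f x) : Continuous fun x => ⌊f x⌋ :=
  Int.isClosedEmbedding_coe_real.isEmbedding.continuous_iff.mpr <| by
    simpa only [Function.comp_def, hfloor] using hf

abbrev CircleCechNerve (n : ℕ) : Type :=
  {v : Fin (n + 1) → ℝ // ∀ i j, (v i : AddCircle (1 : ℝ)) = v j}

theorem CircleCechNerve.continuous_val_apply {n : ℕ} (i : Fin (n + 1)) :
    Continuous fun v : CircleCechNerve n => v.1 i :=
  (_root_.continuous_apply i).comp continuous_subtype_val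

noncomputable def circleCechNerveHomeomorph (n : ℕ) : ℝ × (Fin n → ℤ) ≃ₜ CircleCechNerve n where
  toFun p := ⟨fun i => p.1 + (Fin.partialSum p.2 i : ℤ), fun i j => by
    simp only [AddCircle.coe_add_intCast_one]⟩
  invFun v := (v.1 0, fun j => ⌊v.1 j.succ - v.1 j.castSucc⌋)
  left_inv := by
    rintro ⟨r, m⟩
    simp [Fin.partialSum_succ]
  right_inv := by
    rintro ⟨v, hv⟩
    ext i
    induction i using Fin.induction with
    | zero => simp
    | succ i ih =>
      simp only [Fin.partialSum_succ, Int.cast_add] at ih ⊢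
      rw [intCast_floor_sub_of_coe_eq_coe (hv _ _)]
      linarith
  continuous_toFun := by
    refine .subtype_mk (continuous_pi fun i => continuous_fst.add ?_) _
    exact (continuous_of_discreteTopology
      (f := fun m : Fin n → ℤ => ((Fin.partialSum m i : ℤ) : ℝ))).comp continuous_snd
  continuous_invFun := by
    have hcoord := @CircleCechNerve.continuous_val_apply n
    refine .prodMk (hcoord 0) (continuous_pi fun j => ?_)
    refine ((hcoord _).sub (hcoord _)).floor_of_intCast_floor_eq fun v => ?_
    exact intCast_floor_sub_of_coe_eq_coe (v.2 _ _)

/-- Let `q : ℝ → ℝ/ℤ` be the quotient map onto the additive circle.  For every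
`n`, the map `ℝ × ℤⁿ → ℝ^{n+1}` sending `(r, (m₁, …, mₙ))` to the tuple whose `i`-th entry is
`r + m₁ + ⋯ + m_i` is a bijection onto the `(n+1)`-fold fiber product of `ℝ` over `ℝ/ℤ`
(the set of tuples all of whose entries have the same image in `ℝ/ℤ`), and moreover a
homeomorphism onto this subspace of `ℝ^{n+1}` (with `ℤ` discrete). -/
theorem cechNerve_of_circle_cover (n : ℕ) :
    ∃ e : (ℝ × (Fin n → ℤ)) ≃ₜ
        {v : Fin (n + 1) → ℝ //
          ∀ i j, ((v i : ℝ) : AddCircle (1 : ℝ)) = ((v j : ℝ) : AddCircle (1 : ℝ))},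
      ∀ (r : ℝ) (m : Fin n → ℤ) (i : Fin (n + 1)),
        (e (r, m) : Fin (n + 1) → ℝ) i =
          r + ∑ j ∈ Finset.univ.filter (fun j : Fin n => (j : ℕ) < (i : ℕ)), (m j : ℝ) := by
  refine ⟨circleCechNerveHomeomorph n, fun r m i => ?_⟩
  simp [circleCechNerveHomeomorph, Fin.partialSum_eq_sum_filter_val_lt]
end

section
/- Let G be a group, g ∈ G, C_g its centralizer, and consider the direct product group C_g × ℝ (with ℝ additive). The element (g⁻¹, 1) is central in C_g × ℝ, so the subgroup N it generates is normal; let Λ_g := (C_g × ℝ)/N denote the quotient group, and let π : C_g × ℝ → Λ_g be the projection. Then for every natural number n, the map from C_g × ℝ × ℤ^n to (C_g × ℝ)^{n+1} sending (h, r, (m_1, …, m_n)) to the tuple whose i-th entry (0 ≤ i ≤ n) is (g^{−(m_1+⋯+m_i)} h, r + m_1 + ⋯ + m_i) is a bijection onto the (n+1)-fold fiber product of C_g × ℝ over Λ_g, i.e. onto the set of tuples (u_0, …, u_n) with π(u_i) = π(u_j) for all i, j. -/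
/-- `g` as an element of its own centralizer. -/
def gcen {G : Type*} [Group G] (g : G) : Subgroup.centralizer ({g} : Set G) :=
  ⟨g, Subgroup.mem_centralizer_iff.mpr (by rintro m hm; rw [Set.mem_singleton_iff] at hm; rw [hm])⟩

/-- The element `(g⁻¹, 1)` of `C_g × ℝ` (with `ℝ` written multiplicatively). -/
def huanElt {G : Type*} [Group G] (g : G) :
    Subgroup.centralizer ({g} : Set G) × Multiplicative ℝ :=
  ((gcen g)⁻¹, Multiplicative.ofAdd (1 : ℝ))

theorem huanElt_mul_comm {G : Type*} [Group G] (g : G)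
    (y : Subgroup.centralizer ({g} : Set G) × Multiplicative ℝ) :
    huanElt g * y = y * huanElt g := by
  have h1 : Commute g (y.1 : G) :=
    Subgroup.mem_centralizer_iff.mp y.1.2 g (Set.mem_singleton g)
  have h2 : ((gcen g)⁻¹ : Subgroup.centralizer ({g} : Set G)) * y.1 = y.1 * (gcen g)⁻¹ := by
    have h3 := h1.inv_left
    exact Subtype.ext (by simpa [gcen] using h3.eq)
  exact Prod.ext h2 (mul_comm _ _)

/-- The subgroup generated by `(g⁻¹, 1)` is central, hence normal. -/
instance huanNormal {G : Type*} [Group G] (g : G) :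
    (Subgroup.zpowers (huanElt g)).Normal := by
  constructor
  intro x hx y
  obtain ⟨k, hk⟩ := Subgroup.mem_zpowers_iff.mp hx
  have hcomm : x * y = y * x := by
    rw [← hk]
    exact ((Commute.zpow_left (huanElt_mul_comm g y) k)).eq
  have : y * x * y⁻¹ = x := by
    rw [← hcomm, mul_assoc, mul_inv_cancel, mul_one]
  rwa [this]

/-- Huan's group `Λ_g = (C_g × ℝ)/⟨(g⁻¹, 1)⟩`. -/
abbrev HuanLambda {G : Type*} [Group G] (g : G) :=
  (Subgroup.centralizer ({g} : Set G) × Multiplicative ℝ) ⧸ Subgroup.zpowers (huanElt g)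

/-! Write `z = (g⁻¹, 1)`. Since `z` is central, `π u = π v` exactly when `v = z ^ k * u` for some
`k : ℤ`, and this `k` is unique because the `ℝ`-coordinate of `z ^ k` is `k`. So a tuple in the
fiber product is `(z ^ k₀ * u, …, z ^ kₙ * u)` for one `u` and a unique integer sequence with
`k₀ = 0`, which is the sequence of partial sums of its differences `mᵢ = kᵢ - kᵢ₋₁`. Finally
`z ^ k * (h, r) = (g ^ (-k) * h, r + k)`. -/

theorem Fin.partialSum_injective {M : Type*} [AddGroup M] (n : ℕ) :
    Function.Injective (Fin.partialSum : (Fin n → M) → Fin (n + 1) → M) := by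
  intro f f' h
  funext i
  rw [← Fin.partialSum_right_neg f, ← Fin.partialSum_right_neg f', h]

theorem QuotientGroup.mk_eq_mk_zpowers_iff {α : Type*} [Group α] {z : α}
    (hz : z ∈ Subgroup.center α) {a b : α} :
    (a : α ⧸ Subgroup.zpowers z) = b ↔ ∃ k : ℤ, z ^ k * a = b := by
  rw [QuotientGroup.eq, Subgroup.mem_zpowers_iff]
  refine exists_congr fun k => ?_
  rw [eq_inv_mul_iff_mul_eq, Subgroup.mem_center_iff.mp (Subgroup.zpow_mem _ hz k) a]

theorem bijOn_zpow_partialSum_mul {α : Type*} [Group α] {z : α} (hz : z ∈ Subgroup.center α)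
    (hinj : Function.Injective (z ^ · : ℤ → α)) (n : ℕ) :
    Set.BijOn (fun x : α × (Fin n → ℤ) => fun i => z ^ Fin.partialSum x.2 i * x.1) Set.univ
      {u : Fin (n + 1) → α | ∀ i j, (u i : α ⧸ Subgroup.zpowers z) = u j} := by
  refine ⟨?_, ?_, ?_⟩
  · intro x _ i j
    refine (QuotientGroup.mk_eq_mk_zpowers_iff hz).mpr
      ⟨Fin.partialSum x.2 j - Fin.partialSum x.2 i, ?_⟩
    simp only [← mul_assoc, ← zpow_add, sub_add_cancel]
  · rintro ⟨u, m⟩ - ⟨u', m'⟩ - h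
    have hu : u = u' := by simpa using congrFun h 0
    subst hu
    refine Prod.ext rfl (Fin.partialSum_injective n (funext fun i => hinj ?_))
    exact mul_right_cancel (congrFun h i)
  · intro v hv
    choose k hk using fun i => (QuotientGroup.mk_eq_mk_zpowers_iff hz).mp (hv 0 i)
    have hk0 : k 0 = 0 := hinj (by simpa using hk 0)
    refine ⟨(v 0, fun i => -k i.castSucc + k i.succ), trivial, funext fun i => ?_⟩
    have hsum : Fin.partialSum (fun i => -k i.castSucc + k i.succ) i = k i := by
      simpa [hk0] using congrFun (Fin.partialSum_left_neg k) i
    simp only [hsum, hk]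

section Huan

variable {G : Type*} [Group G] (g : G)

theorem huanElt_mem_center : huanElt g ∈ Subgroup.center _ :=
  Subgroup.mem_center_iff.mpr fun y => (huanElt_mul_comm g y).symm

theorem huanElt_zpow_mul (k : ℤ)
    (h : Subgroup.centralizer ({g} : Set G)) (r : ℝ) :
    huanElt g ^ k * (h, Multiplicative.ofAdd r) =
      (gcen g ^ (-k) * h, Multiplicative.ofAdd (r + k)) := by
  ext
  · simp [huanElt, zpow_neg]
  · simp [huanElt, ← ofAdd_zsmul, ← ofAdd_add, add_comm]

theorem huanElt_zpow_injective :
    Function.Injective (huanElt g ^ · : ℤ → _) := by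
  intro k k' h
  simpa [huanElt] using congrArg (fun u => Multiplicative.toAdd u.2) h

end Huan

/-- The map `C_g × ℝ × ℤⁿ → (C_g × ℝ)^{n+1}` sending `(h, r, (m₁, …, mₙ))` to the
tuple whose `i`-th entry is `(g^{−(m₁+⋯+m_i)} h, r + m₁ + ⋯ + m_i)` is a bijection onto the
`(n+1)`-fold fiber product of `C_g × ℝ` over `Λ_g`, i.e. onto the set of tuples all of whose
entries have the same image under the projection `π : C_g × ℝ → Λ_g`.
(The additive real line is encoded multiplicatively as `Multiplicative ℝ` so that `C_g × ℝ`
is a group.) -/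
theorem huan_cechNerve (G : Type*) [Group G] (g : G) (n : ℕ) :
    Set.BijOn
      (fun x : (Subgroup.centralizer ({g} : Set G)) × ℝ × (Fin n → ℤ) =>
        fun i : Fin (n + 1) =>
          ((gcen g ^ (-(∑ j ∈ Finset.univ.filter (fun j : Fin n => (j : ℕ) < (i : ℕ)), x.2.2 j))
              * x.1,
            Multiplicative.ofAdd (x.2.1 +
              ∑ j ∈ Finset.univ.filter (fun j : Fin n => (j : ℕ) < (i : ℕ)), (x.2.2 j : ℝ))) :
            (Subgroup.centralizer ({g} : Set G)) × Multiplicative ℝ))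
      Set.univ
      {u : Fin (n + 1) → (Subgroup.centralizer ({g} : Set G)) × Multiplicative ℝ |
        ∀ i j, (QuotientGroup.mk (u i) : HuanLambda g) = QuotientGroup.mk (u j)} := by
  have hcoord : Function.Bijective
      fun x : (Subgroup.centralizer ({g} : Set G)) × ℝ × (Fin n → ℤ) =>
        ((x.1, Multiplicative.ofAdd x.2.1), x.2.2) :=
    ((Function.bijective_id.prodMap Multiplicative.ofAdd.bijective).prodMap
      Function.bijective_id).comp (Equiv.prodAssoc _ _ _).symm.bijective
  refine ((bijOn_zpow_partialSum_mul (huanElt_mem_center g) (huanElt_zpow_injective g) n).comp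
    (Set.bijOn_univ.mpr hcoord)).congr ?_
  rintro ⟨h, r, m⟩ -
  funext i
  simp only [Function.comp_apply, huanElt_zpow_mul, Fin.partialSum, List.sum_take_ofFn,
    Int.cast_sum]
end

section
/- Let G be a group, g ∈ G, C_g its centralizer, and Λ_g := (C_g × ℝ)/⟨(g⁻¹, 1)⟩ the quotient of the direct product group C_g × ℝ (ℝ additive) by the central subgroup generated by (g⁻¹, 1). Then: (i) the map C_g → Λ_g sending h to the class of (h, 0) is an injective group homomorphism; (ii) the second projection (h, r) ↦ r descends to a surjective group homomorphism Λ_g → ℝ/ℤ onto the additive circle; and (iii) the kernel of the homomorphism in (ii) equals the image of the homomorphism in (i). In other words, there is a short exact sequence of groups 1 → C_g → Λ_g → ℝ/ℤ → 1. -/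
/-! The element `(c⁻¹, 1)ⁿ = (c⁻ⁿ, n)` has real part `n`, so `C × 0` meets `⟨(c⁻¹, 1)⟩`
trivially and `C` embeds in the quotient; the projection `C × ℝ → ℝ → ℝ/ℤ` kills `(c⁻¹, 1)` and
so descends. A class `[(h, r)]` in its kernel has `r = n ∈ ℤ`, and then `[(h, r)] = [(h cⁿ, 0)]`. -/

namespace CircleExtension

variable {C : Type*} [Group C] {c : C}

variable (c) in
def relSubgroup : Subgroup (C × Multiplicative ℝ) :=
  Subgroup.zpowers (c⁻¹, Multiplicative.ofAdd 1)

theorem mem_zpowers_iff {h : C} {r : ℝ} :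
    (h, Multiplicative.ofAdd r) ∈ relSubgroup c ↔ ∃ n : ℤ, c⁻¹ ^ n = h ∧ (n : ℝ) = r := by
  simp only [relSubgroup, Subgroup.mem_zpowers_iff, Prod.ext_iff, Prod.pow_fst, Prod.pow_snd,
    ← ofAdd_zsmul, EmbeddingLike.apply_eq_iff_eq, zsmul_one]

variable (c) [(relSubgroup c).Normal]

def incl : C →* (C × Multiplicative ℝ) ⧸ relSubgroup c :=
  (QuotientGroup.mk' _).comp (MonoidHom.inl C _)

def proj : (C × Multiplicative ℝ) ⧸ relSubgroup c →* Multiplicative (AddCircle (1 : ℝ)) :=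
  QuotientGroup.lift _
    ((QuotientAddGroup.mk' (AddSubgroup.zmultiples (1 : ℝ))).toMultiplicative.comp
      (MonoidHom.snd C _))
    (Subgroup.zpowers_le.2 (congrArg Multiplicative.ofAdd (AddCircle.coe_period 1)))

theorem incl_injective : Function.Injective (incl c) := by
  refine (injective_iff_map_eq_one _).2 fun h hh ↦ ?_
  obtain ⟨n, rfl, hn⟩ := mem_zpowers_iff.1 ((QuotientGroup.eq_one_iff _).1 hh)
  rw [show n = 0 by exact_mod_cast hn, zpow_zero]

theorem proj_surjective : Function.Surjective (proj c) := by
  intro x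
  obtain ⟨r, hr⟩ := QuotientAddGroup.mk_surjective (Multiplicative.toAdd x)
  exact ⟨QuotientGroup.mk (1, Multiplicative.ofAdd r), congrArg Multiplicative.ofAdd hr⟩

theorem range_incl_eq_ker_proj : (incl c).range = (proj c).ker := by
  ext x
  induction x using QuotientGroup.induction_on with | H z => ?_
  obtain ⟨h, r⟩ := z
  rw [MonoidHom.mem_ker]
  constructor
  · rintro ⟨h', hh'⟩
    rw [← hh']
    rfl
  · intro hr
    obtain ⟨n, hn⟩ := (AddCircle.coe_eq_zero_iff (1 : ℝ)).1 (congrArg Multiplicative.toAdd hr)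
    refine ⟨h * c ^ n, QuotientGroup.eq.2 (mem_zpowers_iff.2 ⟨n, ?_, by simpa using hn⟩)⟩
    simp

end CircleExtension

/-- There is a short exact sequence `1 → C_g → Λ_g → ℝ/ℤ → 1`:
(i) `h ↦ [(h, 0)]` is an injective group homomorphism `C_g → Λ_g`;
(ii) the second projection descends to a surjective group homomorphism `Λ_g → ℝ/ℤ`;
(iii) the kernel of the latter equals the range of the former.
(The additive groups `ℝ` and `ℝ/ℤ` are encoded multiplicatively via `Multiplicative`.) -/
theorem huan_ses (G : Type*) [Group G] (g : G) :
    ∃ (ι : Subgroup.centralizer ({g} : Set G) →* HuanLambda g)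
      (ρ : HuanLambda g →* Multiplicative (AddCircle (1 : ℝ))),
      Function.Injective ι ∧ Function.Surjective ρ ∧
      (∀ h, ι h = QuotientGroup.mk (h, Multiplicative.ofAdd (0 : ℝ))) ∧
      (∀ (h : Subgroup.centralizer ({g} : Set G)) (r : ℝ),
        ρ (QuotientGroup.mk (h, Multiplicative.ofAdd r)) =
          Multiplicative.ofAdd ((r : AddCircle (1 : ℝ)))) ∧
      ι.range = ρ.ker := by
  have : (CircleExtension.relSubgroup (gcen g)).Normal := huanNormal g
  exact ⟨CircleExtension.incl (gcen g), CircleExtension.proj (gcen g),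
    CircleExtension.incl_injective _, CircleExtension.proj_surjective _, fun _ ↦ rfl, fun _ _ ↦ rfl,
    CircleExtension.range_incl_eq_ker_proj _⟩
end

section
/- Let G be a group acting on a set X. The projection functor from the action groupoid X ⫽ G to the one-object groupoid B G (sending every object to the unique object and the morphism x → g·x to g) induces on nerves a morphism of simplicial sets N(X ⫽ G) → N(B G) which is a Kan fibration: it has the right lifting property with respect to every horn inclusion Λ[n, i] ↪ Δ[n] for all n ≥ 1 and 0 ≤ i ≤ n. Moreover, its fiber over the unique vertex of N(B G) (i.e. the pullback along Δ[0] → N(B G)) is isomorphic to the constant (discrete) simplicial set on the set X. -/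
open CategoryTheory Simplicial

universe u

/-- The morphism of nerves induced by a functor (from a category with objects in `Type u` to
one with objects in `Type 0`, both with hom-types in `Type u`); it sends a simplex, i.e. a
sequence of composable arrows, to its image sequence. -/
def nerveMap {C : Type u} [Category.{u} C] {D : Type} [Category.{u} D] (F : C ⥤ D) :
    nerve C ⟶ nerve D where
  app _ := TypeCat.ofHom fun x => x ⋙ F
  naturality _ _ _ := rfl

/-!
The projection `π : X ⫽ G ⥤ B G` lifts every arrow `g` uniquely once its source (or its target)
is prescribed, since `g • x` determines `x`. Hence a functor `Fin (m + 1) ⥤ B G`, i.e. an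
`m`-simplex of `N(B G)`, lifts to `N(X ⫽ G)` uniquely once the value at one vertex is
prescribed. For `n ≥ 1` the horn `Λ[n, i]` contains the vertex `i`, which lies on each of its
faces: lifting the bottom simplex through the value of the horn at `i` gives a simplex whose
faces agree with those of the horn by uniqueness. Over the vertex of `N(B G)` all arrows are `1`,
so the simplices of the fibre are the constant ones, one for each point of `X`.
-/

namespace CategoryTheory

lemma SingleObj.functor_ext {C : Type*} [Category C] {M : Type*} [Monoid M]
    {F₁ F₂ : C ⥤ SingleObj M} (h : ∀ {c d : C} (f : c ⟶ d), F₁.map f = F₂.map f) : F₁ = F₂ :=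
  Functor.ext (fun _ => rfl) fun _ _ f => by simpa using h f

lemma SingleObj.map_eq_one {C : Type*} [Category C] [Quiver.IsThin C] [Subsingleton C]
    {M : Type*} [Monoid M] (F : C ⥤ SingleObj M) {c d : C} (f : c ⟶ d) : F.map f = 1 := by
  obtain rfl := Subsingleton.elim c d
  rw [Subsingleton.elim f (𝟙 c), F.map_id]
  rfl

namespace ActionCategory

lemma back_injective {M X : Type*} [Monoid M] [MulAction M X] :
    Function.Injective (ActionCategory.back : ActionCategory M X → X) :=
  (objEquiv M X).symm.injective

lemma eqToHom_val {M X : Type*} [Monoid M] [MulAction M X] {p q : ActionCategory M X}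
    (h : p = q) : (eqToHom h).val = 1 := by
  subst h
  rfl

variable {C : Type*} [Category C] {G : Type*} [Group G] {X : Type*} [MulAction G X]

lemma map_val_smul_back (A : C ⥤ ActionCategory G X) {c d : C} (f : c ⟶ d) :
    (A.map f).val • (A.obj c).back = (A.obj d).back :=
  (A.map f).2

lemma map_val_eq_of_comp_π_eq {A B : C ⥤ ActionCategory G X} (h : A ⋙ π G X = B ⋙ π G X)
    {c d : C} (f : c ⟶ d) : (A.map f).val = (B.map f).val := by
  simpa using Functor.congr_hom h f

lemma functor_ext_of_comp_π_eq [IsPreconnected C] {A B : C ⥤ ActionCategory G X}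
    (h : A ⋙ π G X = B ⋙ π G X) {c : C} (hc : A.obj c = B.obj c) : A = B := by
  have hval {c d : C} (f : c ⟶ d) := map_val_eq_of_comp_π_eq h f
  have hobj (d : C) : A.obj d = B.obj d :=
    (isPreconnected_induction (fun d => A.obj d = B.obj d)
      (fun f hd => back_injective <| by
        rw [← map_val_smul_back A f, ← map_val_smul_back B f, hval, hd])
      (fun f hd => back_injective <| smul_left_cancel (B.map f).val <| by
        rw [map_val_smul_back B f, ← hval, map_val_smul_back A f, hd])
      hc d).some
  refine Functor.ext hobj fun c d f => Subtype.ext ?_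
  rw [ActionCategory.comp_val, ActionCategory.comp_val, eqToHom_val, eqToHom_val, one_mul,
    mul_one, hval]

lemma eq_const_of_comp_π_eq_const [IsPreconnected C] {A : C ⥤ ActionCategory G X}
    (h : A ⋙ π G X = (Functor.const C).obj (SingleObj.star G)) (c : C) :
    A = (Functor.const C).obj (A.obj c) :=
  functor_ext_of_comp_π_eq h rfl

def liftOfIsInitial (T : C ⥤ SingleObj G) {c₀ : C} (hc₀ : Limits.IsInitial c₀) (x : X) :
    C ⥤ ActionCategory G X where
  obj c := objEquiv G X ((T.map (hc₀.to c) : G) • x)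
  map {c d} f := ⟨T.map f, by
    change (T.map f : G) • (T.map (hc₀.to c) : G) • x = (T.map (hc₀.to d) : G) • x
    rw [smul_smul, ← SingleObj.comp_as_mul, ← T.map_comp, hc₀.hom_ext (hc₀.to c ≫ f)]⟩
  map_id c := Subtype.ext (T.map_id c)
  map_comp f g := Subtype.ext (T.map_comp f g)

lemma liftOfIsInitial_comp_π (T : C ⥤ SingleObj G) {c₀ : C} (hc₀ : Limits.IsInitial c₀)
    (x : X) : liftOfIsInitial T hc₀ x ⋙ π G X = T :=
  SingleObj.functor_ext fun _ => rfl

lemma exists_lift (T : C ⥤ SingleObj G) {c₀ : C} (hc₀ : Limits.IsInitial c₀) (c : C)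
    (a : ActionCategory G X) : ∃ A : C ⥤ ActionCategory G X, A ⋙ π G X = T ∧ A.obj c = a := by
  refine ⟨liftOfIsInitial T hc₀ ((T.map (hc₀.to c) : G)⁻¹ • a.back),
    liftOfIsInitial_comp_π T hc₀ _, ?_⟩
  change objEquiv G X ((T.map (hc₀.to c) : G) • (T.map (hc₀.to c) : G)⁻¹ • a.back) = a
  rw [smul_inv_smul]
  exact back_coe a

def constSimplexHom {G X : Type u} [Group G] [MulAction G X] :
    (Functor.const SimplexCategoryᵒᵖ).obj X ⟶ nerve (ActionCategory G X) where
  app _ := TypeCat.ofHom fun x => (Functor.const _).obj (objEquiv G X x)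

end ActionCategory

end CategoryTheory

namespace SSet.horn

def vertex {n : ℕ} (i : Fin (n + 2)) : (Λ[n + 1, i] : SSet.{u}) _⦋0⦌ :=
  ⟨stdSimplex.const (n + 1) i _, by
    obtain ⟨j, hj⟩ := exists_ne i
    exact (mem_horn_iff_notMem_range _ _).2 ⟨j, hj, by simpa [stdSimplex.const] using hj.symm⟩⟩

lemma map_const_face {n : ℕ} {i j : Fin (n + 2)} (hj : j ≠ i) {k : Fin (n + 1)}
    (hk : j.succAbove k = i) :
    (Λ[n + 1, i] : SSet.{u}).map (SimplexCategory.const ⦋0⦌ ⦋n⦌ k).op (face i j hj) =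
      vertex i := by
  apply Subtype.ext
  apply stdSimplex.objEquiv.injective
  ext a
  exact congrArg Fin.val hk

end SSet.horn

lemma nerve_singleObj_app_eq_const {M : Type u} [Monoid M] (v : Δ[0] ⟶ nerve (SingleObj M))
    {m : SimplexCategoryᵒᵖ} (s : Δ[0].obj m) :
    v.app m s = (Functor.const _).obj (SingleObj.star M) := by
  rw [← SSet.yonedaEquiv.symm_apply_apply v, SSet.yonedaEquiv_symm_zero]
  exact SingleObj.functor_ext fun _ => SingleObj.map_eq_one (C := Fin 1) (SSet.yonedaEquiv v) _

section

open Opposite ActionCategory Limits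

variable {G : Type u} [Group G] {X : Type u} [MulAction G X]

theorem nerveMap_actionCategory_π_hasLiftingProperty_horn (n : ℕ) (i : Fin (n + 2)) :
    HasLiftingProperty (SSet.horn (n + 1) i).ι (nerveMap (π G X)) := by
  refine ⟨fun {top bottom} sq => ?_⟩
  obtain ⟨σ, hσ, hσi⟩ := exists_lift (SSet.yonedaEquiv bottom) isInitialBot i
    ((top.app _ (SSet.horn.vertex i)).obj 0)
  have hfac : SSet.yonedaEquiv.symm σ ≫ nerveMap (π G X) = bottom :=
    SSet.yonedaEquiv.injective hσ
  refine ⟨⟨⟨SSet.yonedaEquiv.symm σ, SSet.horn.hom_ext _ _ fun j hj => ?_, hfac⟩⟩⟩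
  obtain ⟨k, hk⟩ := Fin.exists_succAbove_eq hj.symm
  refine functor_ext_of_comp_π_eq (c := k) ?_ ?_
  · exact congrArg (fun φ => φ.app _ (SSet.horn.face i j hj))
      (show (SSet.horn (n + 1) i).ι ≫ SSet.yonedaEquiv.symm σ ≫ nerveMap (π G X) =
        top ≫ nerveMap (π G X) by rw [hfac, sq.w])
  · change σ.obj (j.succAbove k) = _
    rw [hk, hσi, ← SSet.horn.map_const_face hj hk, NatTrans.naturality_apply]
    rfl

def nerveActionCategoryFiberCone (v : Δ[0] ⟶ nerve (SingleObj G)) :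
    PullbackCone v (nerveMap (π G X)) :=
  PullbackCone.mk (SSet.stdSimplex.isTerminalObj₀.from _) constSimplexHom <| by
    ext m x
    exact nerve_singleObj_app_eq_const v _

def nerveActionCategoryFiberConeIsLimit (v : Δ[0] ⟶ nerve (SingleObj G)) :
    IsLimit (nerveActionCategoryFiberCone (X := X) v) := by
  have hconst (s : PullbackCone v (nerveMap (π G X))) {m : SimplexCategoryᵒᵖ} (w : s.pt.obj m) :
      s.snd.app m w = (Functor.const _).obj ((s.snd.app m w).obj 0) :=
    eq_const_of_comp_π_eq_const ((congrArg (fun φ => φ.app m w) s.condition).symm.trans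
      (nerve_singleObj_app_eq_const v _)) 0
  refine PullbackCone.IsLimit.mk _ (fun s => ⟨fun m => TypeCat.ofHom fun w =>
    ((s.snd.app m w).obj 0).back, fun m m' f => ?_⟩) (fun s => SSet.stdSimplex.ext₀)
    (fun s => ?_) (fun s lift _ hlift => ?_)
  · ext w
    change ((s.snd.app m' (s.pt.map f w)).obj 0).back = _
    rw [NatTrans.naturality_apply, hconst s w]
    rfl
  · ext m w
    exact (hconst s w).symm
  · ext m w
    exact congrArg (fun φ => ((φ.app m w).obj 0).back) hlift

end

/-- For a group `G` acting on a set `X`, the map of nerves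
`N(X ⫽ G) → N(B G)` induced by the projection functor `ActionCategory.π` from the action
groupoid to the one-object groupoid is a Kan fibration: it has the right lifting property
with respect to every horn inclusion `Λ[n, i] ↪ Δ[n]` for all `n ≥ 1` and `0 ≤ i ≤ n`.
Moreover, its fiber over the unique vertex of `N(B G)` — the pullback along any map
`Δ[0] ⟶ N(B G)` — is isomorphic to the constant (discrete) simplicial set on `X`. -/
theorem nerve_actionCategory_kanFibration (G : Type u) [Group G] (X : Type u) [MulAction G X] :
    (∀ (n : ℕ), 1 ≤ n → ∀ (i : Fin (n + 1)),
      HasLiftingProperty (SSet.horn n i).ι (nerveMap (ActionCategory.π G X))) ∧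
    ∀ v : Δ[0] ⟶ nerve (SingleObj G),
      Nonempty (Limits.pullback v (nerveMap (ActionCategory.π G X)) ≅
        (Functor.const SimplexCategoryᵒᵖ).obj X) := by
  refine ⟨fun n hn i => ?_, fun v => ⟨?_⟩⟩
  · obtain ⟨m, rfl⟩ := Nat.exists_eq_add_of_le' hn
    exact nerveMap_actionCategory_π_hasLiftingProperty_horn m i
  · exact (Limits.pullbackIsPullback _ _).conePointUniqueUpToIso
      (nerveActionCategoryFiberConeIsLimit v)
end

section
/- Let p, q be natural numbers. A (p+q)-simplex of the product simplicial set Δ[p] × Δ[q] is given by a pair (f, g) of monotone maps f : Fin(p+q+1) → Fin(p+1) and g : Fin(p+q+1) → Fin(q+1). Such a simplex is nondegenerate (i.e. not in the image of any degeneracy operator of Δ[p] × Δ[q]) if and only if the map i ↦ (f(i), g(i)) is injective, and this holds if and only if for every 0 ≤ k < p+q exactly one of the following occurs: f(k+1) = f(k) + 1 and g(k+1) = g(k), or g(k+1) = g(k) + 1 and f(k+1) = f(k). -/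
/-!
The simplex `i ↦ (f i, g i)` is a monotone map into the product order, so it is injective iff it
moves at every step `k → k + 1`, and it factors through the degeneracy `σ_k` iff it stays put at
step `k`; this gives the first equivalence. For the second, if it moves at every step then
`i ↦ f i + g i` is strictly monotone from `Fin (p + q + 1)` into `{0, …, p + q}`, hence equals the
identity, so at each step exactly one coordinate goes up, by exactly one.
-/

namespace Fin

variable {α : Type*} {n : ℕ}

theorem injective_iff_castSucc_ne_succ [PartialOrder α] {φ : Fin (n + 1) → α}
    (hφ : Monotone φ) : Function.Injective φ ↔ ∀ k : Fin n, φ k.castSucc ≠ φ k.succ := by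
  rw [← hφ.strictMono_iff_injective, strictMono_iff_lt_succ]
  exact forall_congr' fun k => (hφ (castSucc_le_succ k)).lt_iff_ne

theorem exists_orderHom_eq_comp_predAbove_iff [Preorder α] (φ : Fin (n + 1) →o α) (k : Fin n) :
    (∃ ψ : Fin n →o α, ∀ i, φ i = ψ (k.predAbove i)) ↔ φ k.castSucc = φ k.succ := by
  constructor
  · rintro ⟨ψ, hψ⟩
    rw [hψ, hψ, predAbove_castSucc_self, predAbove_succ_self]
  · intro hk
    refine ⟨φ.comp ⟨k.castSucc.succAbove, (strictMono_succAbove _).monotone⟩, fun i => ?_⟩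
    obtain rfl | hi := eq_or_ne i k.castSucc
    · simp [hk]
    · simp [succAbove_predAbove hi]

theorem apply_eq_val_of_strictMono {s : Fin (n + 1) → ℕ} (hs : StrictMono s)
    (hlast : s (last n) ≤ n) (i : Fin (n + 1)) : s i = i := by
  have hbound (j : Fin (n + 1)) : s j < n + 1 :=
    Nat.lt_succ_of_le ((hs.monotone (le_last j)).trans hlast)
  have hid : (fun j => (⟨s j, hbound j⟩ : Fin (n + 1))) = id :=
    StrictMono.eq_id fun _ _ hij => hs hij
  exact congrArg val (congrFun hid i)

end Fin

theorem Nat.xor_of_add_eq_add_add_one {a a' b b' : ℕ} (ha : a ≤ a') (hb : b ≤ b')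
    (h : a' + b' = a + b + 1) : Xor (a' = a + 1 ∧ b' = b) (b' = b + 1 ∧ a' = a) := by
  rw [xor_def]
  omega

/-- A `(p+q)`-simplex of `Δ[p] × Δ[q]`, given by a pair `(f, g)` of monotone
maps `f : Fin (p+q+1) →o Fin (p+1)` and `g : Fin (p+q+1) →o Fin (q+1)`, is nondegenerate
(i.e. does not factor through any degeneracy `σ_k = Fin.predAbove k`, componentwise with the
same `k`) if and only if the map `i ↦ (f i, g i)` is injective; and the latter holds if and
only if at every step `k` exactly one of the following occurs: `f` increases by exactly one
while `g` is constant, or `g` increases by exactly one while `f` is constant. -/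
theorem nondegenerate_prod_simplex_iff (p q : ℕ)
    (f : Fin (p + q + 1) →o Fin (p + 1)) (g : Fin (p + q + 1) →o Fin (q + 1)) :
    ((¬ ∃ (k : Fin (p + q)) (f' : Fin (p + q) →o Fin (p + 1)) (g' : Fin (p + q) →o Fin (q + 1)),
        (∀ i, f i = f' (k.predAbove i)) ∧ (∀ i, g i = g' (k.predAbove i))) ↔
      Function.Injective (fun i => (f i, g i))) ∧
    (Function.Injective (fun i => (f i, g i)) ↔
      ∀ k : Fin (p + q),
        Xor' (((f k.succ : ℕ) = (f k.castSucc : ℕ) + 1) ∧ g k.succ = g k.castSucc)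
             (((g k.succ : ℕ) = (g k.castSucc : ℕ) + 1) ∧ f k.succ = f k.castSucc)) := by
  have hinj := Fin.injective_iff_castSucc_ne_succ (f.monotone.prodMk g.monotone)
  simp only [hinj, ne_eq, Prod.mk.injEq]
  refine ⟨?_, fun h k => ?_, fun h k hk => ?_⟩
  · simp only [← exists_and_exists_comm, Fin.exists_orderHom_eq_comp_predAbove_iff, not_exists]
  · have hstep (k : Fin (p + q)) : (f k.castSucc : ℕ) + g k.castSucc < f k.succ + g k.succ := by
      have hf : f k.castSucc ≤ f k.succ := f.monotone (Fin.castSucc_le_succ k)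
      have hg : g k.castSucc ≤ g k.succ := g.monotone (Fin.castSucc_le_succ k)
      have hmoves := h k
      simp only [Fin.ext_iff] at hmoves
      omega
    have hlast : (f (Fin.last _) : ℕ) + g (Fin.last _) ≤ p + q :=
      Nat.add_le_add (f _).is_le (g _).is_le
    have hsum := Fin.apply_eq_val_of_strictMono (s := fun i => (f i : ℕ) + g i)
      (Fin.strictMono_iff_lt_succ.2 hstep) hlast
    simp only [Fin.ext_iff]
    exact Nat.xor_of_add_eq_add_add_one (f.monotone (Fin.castSucc_le_succ k))
      (g.monotone (Fin.castSucc_le_succ k)) (by rw [hsum, hsum]; rfl)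
  · have hmoves := Xor.or (h k)
    simp only [hk.1, hk.2] at hmoves
    omega
end

section
/- Let p, q be natural numbers. The set of nondegenerate (p+q)-simplices of Δ[p] × Δ[q] is in bijection with the set of (p,q)-shuffles, equivalently with the p-element subsets of Fin(p+q): the bijection sends a nondegenerate simplex, given by a pair of monotone maps (f, g) with f : Fin(p+q+1) → Fin(p+1) and g : Fin(p+q+1) → Fin(q+1), to the set {k ∈ Fin(p+q) | f(k+1) = f(k) + 1} of steps at which the first coordinate increases. In particular, the number of nondegenerate (p+q)-simplices of Δ[p] × Δ[q] equals the binomial coefficient (p+q choose p). -/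
/-- The type of nondegenerate `(p+q)`-simplices of `Δ[p] × Δ[q]`: pairs of monotone maps
`(f, g)` which do not factor (componentwise, with the same `k`) through any degeneracy
`σ_k = Fin.predAbove k`. -/
def NonDegPair (p q : ℕ) : Type :=
  {fg : (Fin (p + q + 1) →o Fin (p + 1)) × (Fin (p + q + 1) →o Fin (q + 1)) //
    ¬ ∃ (k : Fin (p + q)) (f' : Fin (p + q) →o Fin (p + 1)) (g' : Fin (p + q) →o Fin (q + 1)),
      (∀ i, fg.1 i = f' (k.predAbove i)) ∧ (∀ i, fg.2 i = g' (k.predAbove i))}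

/-!
A nondegenerate simplex `(f, g)` never stays put in both coordinates, so `f + g` is strictly
monotone from `Fin (p+q+1)` to itself, hence the identity. Thus at every step exactly one
coordinate goes up by one, and `f i` counts the steps `k < i` in the set `S` where `f` moves.
Conversely, `i ↦ (#{k ∈ S | k < i}, #{k ∉ S | k < i})` is a nondegenerate simplex for every
`p`-element subset `S`.
-/

open Finset

namespace Fin

variable {n : ℕ} {α β : Type*} [Preorder α] [Preorder β]

theorem exists_comp_predAbove_iff (f : Fin (n + 1) →o α) (k : Fin n) :
    (∃ f' : Fin n →o α, ∀ i, f i = f' (k.predAbove i)) ↔ f k.castSucc = f k.succ := by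
  constructor
  · rintro ⟨f', hf'⟩
    rw [hf', hf', predAbove_castSucc_self, predAbove_succ_self]
  · intro hk
    refine ⟨f.comp ⟨_, (strictMono_succAbove k.castSucc).monotone⟩, fun i => ?_⟩
    by_cases hi : i = k.castSucc
    · subst hi
      simp [succAbove_of_le_castSucc _ _ le_rfl, hk]
    · simp [succAbove_predAbove hi]

theorem exists_prod_comp_predAbove_iff (f : Fin (n + 1) →o α) (g : Fin (n + 1) →o β) :
    (∃ (k : Fin n) (f' : Fin n →o α) (g' : Fin n →o β),
        (∀ i, f i = f' (k.predAbove i)) ∧ ∀ i, g i = g' (k.predAbove i)) ↔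
      ∃ k : Fin n, f k.castSucc = f k.succ ∧ g k.castSucc = g k.succ := by
  simp only [← exists_comp_predAbove_iff, exists_and_left, exists_and_right]

end Fin

section CountBelow

variable {n : ℕ}

def countBelow (s : Finset (Fin n)) (m : ℕ) : ℕ := #(s.filter fun k : Fin n => (k : ℕ) < m)

theorem countBelow_le_card (s : Finset (Fin n)) (m : ℕ) : countBelow s m ≤ #s :=
  card_filter_le _ _

theorem countBelow_mono (s : Finset (Fin n)) : Monotone (countBelow s) := fun _ _ hab =>
  card_le_card (monotone_filter_right s fun _ _ hj => lt_of_lt_of_le hj hab)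

theorem countBelow_succ (s : Finset (Fin n)) (k : Fin n) :
    countBelow s (k + 1) = countBelow s k + if k ∈ s then 1 else 0 := by
  have hsplit : ∀ j : Fin n, (if (j : ℕ) < k + 1 then 1 else 0) =
      (if (j : ℕ) < k then 1 else 0) + if k = j then 1 else 0 := by
    intro j
    have := Fin.val_eq_val (a := k) (b := j)
    split_ifs <;> omega
  simp only [countBelow, card_filter, hsplit, sum_add_distrib, sum_ite_eq]

end CountBelow

def stepSet {n m : ℕ} (f : Fin (n + 1) → Fin (m + 1)) : Finset (Fin n) :=
  univ.filter fun k : Fin n => (f k.succ : ℕ) = (f k.castSucc : ℕ) + 1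

section MonotonePath

variable {p q : ℕ} {f : Fin (p + q + 1) →o Fin (p + 1)} {g : Fin (p + q + 1) →o Fin (q + 1)}

theorem val_add_val_of_not_const (hfg : ∀ k : Fin (p + q),
    ¬ (f k.castSucc = f k.succ ∧ g k.castSucc = g k.succ)) (i : Fin (p + q + 1)) :
    (f i : ℕ) + g i = i := by
  let h : Fin (p + q + 1) → Fin (p + q + 1) := fun i =>
    ⟨f i + g i, by have := (f i).is_le; have := (g i).is_le; omega⟩
  have hmono : StrictMono h := by
    refine Fin.strictMono_iff_lt_succ.2 fun k => ?_
    have hf := Fin.le_def.1 (f.monotone (Fin.castSucc_le_succ k))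
    have hg := Fin.le_def.1 (g.monotone (Fin.castSucc_le_succ k))
    have hne := hfg k
    rw [Fin.ext_iff, Fin.ext_iff] at hne
    simp only [h, Fin.mk_lt_mk]
    omega
  exact congrArg Fin.val (hmono.apply_eq (x := i))

variable (hsum : ∀ i : Fin (p + q + 1), (f i : ℕ) + g i = i)
include hsum

theorem step_cases_of_val_add_val (k : Fin (p + q)) :
    ((f k.succ : ℕ) = f k.castSucc + 1 ∧ (g k.succ : ℕ) = g k.castSucc) ∨
      ((f k.succ : ℕ) = f k.castSucc ∧ (g k.succ : ℕ) = g k.castSucc + 1) := by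
  have hf := Fin.le_def.1 (f.monotone (Fin.castSucc_le_succ k))
  have hg := Fin.le_def.1 (g.monotone (Fin.castSucc_le_succ k))
  have hcs := hsum k.castSucc
  have hs := hsum k.succ
  simp only [Fin.val_castSucc, Fin.val_succ] at hcs hs
  omega

theorem val_eq_countBelow_stepSet (i : Fin (p + q + 1)) :
    (f i : ℕ) = countBelow (stepSet f) i := by
  induction i using Fin.induction with
  | zero =>
    have h0 := hsum 0
    simp only [Fin.val_zero, Nat.add_eq_zero_iff] at h0
    simp [countBelow, h0.1]
  | succ k ih =>
    rw [Fin.val_castSucc] at ih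
    rw [Fin.val_succ, countBelow_succ, ← ih]
    simp only [stepSet, mem_filter, mem_univ, true_and]
    rcases step_cases_of_val_add_val hsum k with h | h <;> simp [h.1]

theorem card_stepSet : #(stepSet f) = p := by
  have hlast := val_eq_countBelow_stepSet hsum (Fin.last _)
  have hsum_last := hsum (Fin.last _)
  have hf := (f (Fin.last _)).is_le
  have hg := (g (Fin.last _)).is_le
  have hall : countBelow (stepSet f) (p + q) = #(stepSet f) :=
    congrArg card (filter_true_of_mem fun (k : Fin (p + q)) _ => k.isLt)
  simp only [Fin.val_last] at hlast hsum_last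
  omega

end MonotonePath

namespace NonDegPair

variable {p q : ℕ}

theorem not_const_at_step (x : NonDegPair p q) (k : Fin (p + q)) :
    ¬ (x.1.1 k.castSucc = x.1.1 k.succ ∧ x.1.2 k.castSucc = x.1.2 k.succ) := fun hk =>
  x.2 ((Fin.exists_prod_comp_predAbove_iff _ _).2 ⟨k, hk⟩)

theorem val_add_val (x : NonDegPair p q) (i : Fin (p + q + 1)) :
    (x.1.1 i : ℕ) + x.1.2 i = i :=
  val_add_val_of_not_const x.not_const_at_step i

theorem stepSet_injective : Function.Injective fun x : NonDegPair p q => stepSet x.1.1 := by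
  intro x y hxy
  have hf : ∀ i, (x.1.1 i : ℕ) = y.1.1 i := fun i => by
    rw [val_eq_countBelow_stepSet x.val_add_val, val_eq_countBelow_stepSet y.val_add_val]
    exact congrArg (countBelow · i) hxy
  have hg : ∀ i, (x.1.2 i : ℕ) = y.1.2 i := fun i => by
    have := x.val_add_val i; have := y.val_add_val i; have := hf i; omega
  exact Subtype.ext (Prod.ext (OrderHom.ext _ _ (funext fun i => Fin.ext (hf i)))
    (OrderHom.ext _ _ (funext fun i => Fin.ext (hg i))))

def shufflePath (s : Finset (Fin (p + q))) (hs : #s = p) :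
    (Fin (p + q + 1) →o Fin (p + 1)) × (Fin (p + q + 1) →o Fin (q + 1)) :=
  (⟨fun i => ⟨countBelow s i, Nat.lt_succ_of_le ((countBelow_le_card s i).trans hs.le)⟩,
      fun _ _ hij => Fin.mk_le_mk.2 (countBelow_mono s hij)⟩,
    ⟨fun i => ⟨countBelow sᶜ i, Nat.lt_succ_of_le <| by
        have := countBelow_le_card sᶜ i
        rw [card_compl, hs, Fintype.card_fin] at this
        omega⟩,
      fun _ _ hij => Fin.mk_le_mk.2 (countBelow_mono sᶜ hij)⟩)

theorem val_shufflePath_fst (s : Finset (Fin (p + q))) (hs : #s = p) (i : Fin (p + q + 1)) :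
    ((shufflePath s hs).1 i : ℕ) = countBelow s i :=
  rfl

theorem val_shufflePath_snd (s : Finset (Fin (p + q))) (hs : #s = p) (i : Fin (p + q + 1)) :
    ((shufflePath s hs).2 i : ℕ) = countBelow sᶜ i :=
  rfl

theorem shufflePath_not_const (s : Finset (Fin (p + q))) (hs : #s = p) (k : Fin (p + q)) :
    ¬ ((shufflePath s hs).1 k.castSucc = (shufflePath s hs).1 k.succ ∧
      (shufflePath s hs).2 k.castSucc = (shufflePath s hs).2 k.succ) := by
  rintro ⟨hf, hg⟩
  replace hf := congrArg Fin.val hf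
  replace hg := congrArg Fin.val hg
  rw [val_shufflePath_fst, val_shufflePath_fst, Fin.val_castSucc, Fin.val_succ,
    countBelow_succ] at hf
  rw [val_shufflePath_snd, val_shufflePath_snd, Fin.val_castSucc, Fin.val_succ,
    countBelow_succ] at hg
  by_cases hk : k ∈ s <;> simp_all

def ofShuffle (s : Finset (Fin (p + q))) (hs : #s = p) : NonDegPair p q :=
  ⟨shufflePath s hs, fun h =>
    let ⟨k, hk⟩ := (Fin.exists_prod_comp_predAbove_iff _ _).1 h
    shufflePath_not_const s hs k hk⟩

theorem stepSet_ofShuffle (s : Finset (Fin (p + q))) (hs : #s = p) :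
    stepSet (ofShuffle s hs).1.1 = s := by
  ext k
  have := countBelow_succ s k
  rw [stepSet, mem_filter]
  simp only [ofShuffle, val_shufflePath_fst, Fin.val_castSucc, Fin.val_succ]
  by_cases hk : k ∈ s <;> simp_all

end NonDegPair

/-- The nondegenerate `(p+q)`-simplices of `Δ[p] × Δ[q]` are in bijection with
the `p`-element subsets of `Fin (p+q)` ((p,q)-shuffles), the bijection sending a simplex
`(f, g)` to the set of steps at which the first coordinate increases.  In particular the
number of nondegenerate `(p+q)`-simplices equals the binomial coefficient `(p+q).choose p`. -/
theorem nondegenerate_prod_simplex_shuffles (p q : ℕ) :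
    Set.BijOn
      (fun fg : NonDegPair p q =>
        Finset.univ.filter (fun k : Fin (p + q) =>
          (fg.1.1 k.succ : ℕ) = (fg.1.1 k.castSucc : ℕ) + 1))
      Set.univ
      {s : Finset (Fin (p + q)) | s.card = p} ∧
    Nat.card (NonDegPair p q) = Nat.choose (p + q) p := by
  have hbij : Set.BijOn (fun x : NonDegPair p q => stepSet x.1.1) Set.univ
      {s : Finset (Fin (p + q)) | #s = p} :=
    ⟨fun x _ => card_stepSet x.val_add_val, NonDegPair.stepSet_injective.injOn,
      fun s hs => ⟨NonDegPair.ofShuffle s hs, trivial, NonDegPair.stepSet_ofShuffle s hs⟩⟩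
  refine ⟨hbij, ?_⟩
  rw [← Nat.card_univ, Nat.card_congr (hbij.equiv _), Set.coe_ofPred, Nat.card_eq_fintype_card,
    Fintype.card_finset_len, Fintype.card_fin]
end
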